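/- arXiv:2212.14299 — 3 statements merged into one kernel-verified Lean document; each statement's English description precedes it below -/
import Mathlib

section
/- The determinant of the 4x4 matrix B_s equals (1/((γ−1) c_v)) · ([p̄]² p₊ / (ρ₊ q₊)³) · (1 − M₊²), and since 0 < M₊ < 1 this determinant is nonzero. -/
open Matrix

/-- The coefficient matrix `B_s` of the linearized Rankine–Hugoniot conditions,
with `csq = c̄₊² = γp₊/ρ₊` and `pj = [p̄] = p₊ − p₋`. -/
noncomputable def Bs (γ cv ρp qp pp csq pj : ℝ) : Matrix (Fin 4) (Fin 4) ℝ :=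
  (1 / (ρp * qp) * pj) •
    !![-1 / (ρp * csq), -1 / qp, 1 / (γ * cv), 0;
       1 - pp / (ρp * csq), ρp * qp - pp / qp, pp / (γ * cv), 0;
       qp / pj, ρp * qp ^ 2 / pj, (1 / ((γ - 1) * cv)) * (pp * qp / pj), 0;
       0, 0, 0, ρp * qp / pj]

lemma det4 (a b c d e f g h i j : ℝ) :
    (!![a, b, c, 0; d, e, f, 0; g, h, i, 0; 0, 0, 0, j] : Matrix (Fin 4) (Fin 4) ℝ).det
      = j * (a * (e * i - f * h) - b * (d * i - f * g) + c * (d * h - e * g)) := by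
  simp [Matrix.det_succ_row_zero, Fin.sum_univ_succ, Fin.succAbove]
  ring

theorem stmt3 (γ cv ρp qp pp csq pj M : ℝ) (hγ : 1 < γ) (hcv : 0 < cv)
    (hρ : 0 < ρp) (hq : 0 < qp) (hp : 0 < pp) (hpj : pj ≠ 0)
    (hcsq : csq = γ * pp / ρp) (hMdef : M = qp / Real.sqrt csq)
    (hM : M ∈ Set.Ioo (0 : ℝ) 1) :
    (Bs γ cv ρp qp pp csq pj).det
      = (1 / ((γ - 1) * cv)) * (pj ^ 2 * pp / (ρp * qp) ^ 3) * (1 - M ^ 2) ∧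
    (Bs γ cv ρp qp pp csq pj).det ≠ 0 := by
  have hγ0 : (0:ℝ) < γ := by linarith
  have hγ1 : (0:ℝ) < γ - 1 := by linarith
  have hγ1' : γ - 1 ≠ 0 := ne_of_gt hγ1
  have hcsq0 : 0 < csq := by rw [hcsq]; positivity
  have hM2 : M ^ 2 = qp ^ 2 * ρp / (γ * pp) := by
    rw [hMdef, div_pow, Real.sq_sqrt hcsq0.le, hcsq]
    field_simp
  have key : (Bs γ cv ρp qp pp csq pj).det
      = (1 / ((γ - 1) * cv)) * (pj ^ 2 * pp / (ρp * qp) ^ 3) * (1 - M ^ 2) := by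
    rw [Bs, Matrix.det_smul, Fintype.card_fin, det4, hM2, hcsq]
    field_simp
    ring
  refine ⟨key, key ▸ ?_⟩
  obtain ⟨hM0, hM1⟩ := hM
  have h1 : 1 - M ^ 2 > 0 := by nlinarith
  have hne : (1 : ℝ) / ((γ - 1) * cv) * (pj ^ 2 * pp / (ρp * qp) ^ 3) > 0 := by positivity
  exact ne_of_gt (mul_pos hne h1)
end

section
/- Let R(ξ; σ, κ) = σ R_σ(ξ) + κ R_κ(ξ) with R_σ ∈ C¹([0,L]), R_σ'(ξ) = −K̇₁ Θ(ξ), R_κ(ξ) = −f̄₁⁺L + K̇₂ξ. Suppose κ = A₁ σ^s with s > 1, A₁ > 0, and ξ̄* ∈ (0,L) satisfies R_σ(ξ̄*) = P_{σ*} with Θ(ξ̄*) ≠ 0, where the exit datum gives P_*(σ,κ) = σP_{σ*} + κP_{κ*}. Then there exists σ₁ > 0 such that for all σ ∈ (0, σ₁) the equation R(ξ; σ, κ) = P_*(σ, κ) has a solution ξ(σ) ∈ (0,L) satisfying |ξ(σ) − ξ̄*| ≤ C σ^{s−1} for a constant C independent of σ. -/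
/-- IVT helper: a continuous function whose values at the endpoints have
opposite (weak) signs has a zero in the interval. -/
lemma ivt_zero {f : ℝ → ℝ} {a b : ℝ} (hab : a ≤ b)
    (hf : ContinuousOn f (Set.Icc a b)) (h : f a * f b ≤ 0) :
    ∃ x ∈ Set.Icc a b, f x = 0 := by
  rcases mul_nonpos_iff.mp h with ⟨ha, hb⟩ | ⟨ha, hb⟩
  · have h0 : (0 : ℝ) ∈ Set.Icc (f b) (f a) := ⟨hb, ha⟩
    obtain ⟨x, hx, hfx⟩ := intermediate_value_Icc' hab hf h0
    exact ⟨x, hx, hfx⟩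
  · have h0 : (0 : ℝ) ∈ Set.Icc (f a) (f b) := ⟨ha, hb⟩
    obtain ⟨x, hx, hfx⟩ := intermediate_value_Icc hab hf h0
    exact ⟨x, hx, hfx⟩

/-- Case (i) of the approximating shock location: when the boundary
perturbation dominates the reaction (`κ = A₁σˢ`, `s > 1`), the solvability
equation `σR_σ(ξ) + κR_κ(ξ) = σP_{σ*} + κP_{κ*}` has a solution `ξ(σ)` with
`|ξ(σ) − ξ̄*| ≤ Cσ^{s−1}` for all small `σ`. -/
theorem stmt7 (L K₁ K₂ f₁ A₁ s Pσs Pκs ξs : ℝ)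
    (hL : 0 < L) (hK₁ : 0 < K₁) (hK₂ : 0 < K₂) (hf : 0 < f₁)
    (hA : 0 < A₁) (hs : 1 < s)
    (Θ : ℝ → ℝ) (hΘ : Continuous Θ)
    (Rσ : ℝ → ℝ)
    (hRσ : Rσ = fun ξ => (∫ y in (0:ℝ)..L, Θ y) - K₁ * ∫ y in (0:ℝ)..ξ, Θ y)
    (Rκ : ℝ → ℝ) (hRκ : Rκ = fun ξ => -f₁ * L + K₂ * ξ)
    (hξs : ξs ∈ Set.Ioo (0 : ℝ) L) (hroot : Rσ ξs = Pσs) (hΘξ : Θ ξs ≠ 0) :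
    ∃ C > 0, ∃ σ₁ > 0, ∀ σ ∈ Set.Ioo (0 : ℝ) σ₁, ∃ ξ ∈ Set.Ioo (0 : ℝ) L,
      σ * Rσ ξ + (A₁ * σ ^ s) * Rκ ξ = σ * Pσs + (A₁ * σ ^ s) * Pκs ∧
      |ξ - ξs| ≤ C * σ ^ (s - 1) := by
  obtain ⟨hξs0, hξsL⟩ := hξs
  -- integrability
  have hΘi : ∀ a b : ℝ, IntervalIntegrable Θ MeasureTheory.volume a b :=
    fun a b => hΘ.intervalIntegrable a b
  -- difference formula for Rσ
  have hdiff : ∀ a b : ℝ, Rσ b - Rσ a = -K₁ * ∫ y in a..b, Θ y := by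
    intro a b
    have h := intervalIntegral.integral_interval_sub_left (hΘi 0 b) (hΘi 0 a)
    rw [hRσ]
    simp only
    rw [← h]
    ring
  -- continuity of Rσ
  have hRσcont : Continuous Rσ := by
    rw [hRσ]
    exact continuous_const.sub (continuous_const.mul
      (intervalIntegral.continuous_primitive hΘi 0))
  set c : ℝ := |Θ ξs| / 2 with hc_def
  have hc : 0 < c := by
    have := abs_pos.mpr hΘξ
    positivity
  -- neighborhood where Θ is close to Θ ξs
  obtain ⟨δ', hδ'pos, hδ'⟩ := Metric.continuousAt_iff.mp hΘ.continuousAt c hc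
  set δ₀ : ℝ := min (δ' / 2) (min (ξs / 2) ((L - ξs) / 2)) with hδ₀_def
  have hδ₀pos : 0 < δ₀ := by
    apply lt_min (by linarith)
    exact lt_min (by linarith) (by linarith)
  have hδ₀a : δ₀ ≤ δ' / 2 := min_le_left _ _
  have hδ₀b : δ₀ ≤ ξs / 2 := le_trans (min_le_right _ _) (min_le_left _ _)
  have hδ₀c : δ₀ ≤ (L - ξs) / 2 := le_trans (min_le_right _ _) (min_le_right _ _)
  have hΘnear : ∀ x : ℝ, |x - ξs| ≤ δ₀ → |Θ x - Θ ξs| < c := by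
    intro x hx
    have : dist x ξs < δ' := by rw [Real.dist_eq]; linarith
    have := hδ' this
    rwa [Real.dist_eq] at this
  -- bound on Rκ - Pκs on [0, L]
  set M : ℝ := f₁ * L + K₂ * L + |Pκs| + 1 with hM_def
  have hM : 0 < M := by positivity
  have hRκbd : ∀ x ∈ Set.Icc (0 : ℝ) L, |Rκ x - Pκs| ≤ M := by
    intro x hx
    rw [hRκ]
    simp only
    have hP1 : Pκs ≤ |Pκs| := le_abs_self _
    have hP2 : -|Pκs| ≤ Pκs := neg_abs_le _
    rw [abs_le]
    constructor
    · nlinarith [hx.1, hx.2]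
    · nlinarith [hx.1, hx.2]
  -- the constant C
  set C : ℝ := 2 * A₁ * M / (K₁ * c) with hC_def
  have hC : 0 < C := by positivity
  have hKcC : K₁ * c * C = 2 * A₁ * M := by
    rw [hC_def]
    exact mul_div_cancel₀ _ (mul_ne_zero hK₁.ne' hc.ne')
  refine ⟨C, hC, min 1 ((δ₀ / C) ^ (s - 1)⁻¹), lt_min one_pos (by positivity), ?_⟩
  intro σ hσ
  obtain ⟨hσ0, hσ1⟩ := hσ
  have hs1 : (0 : ℝ) < s - 1 := by linarith
  -- σ^(s-1) is small
  have hσpow_pos : 0 < σ ^ (s - 1) := Real.rpow_pos_of_pos hσ0 _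
  have hσpow_lt : σ ^ (s - 1) ≤ δ₀ / C := by
    have h1 : σ < (δ₀ / C) ^ (s - 1)⁻¹ := lt_of_lt_of_le hσ1 (min_le_right _ _)
    have h2 : σ ^ (s - 1) ≤ ((δ₀ / C) ^ (s - 1)⁻¹) ^ (s - 1) :=
      Real.rpow_le_rpow (le_of_lt hσ0) (le_of_lt h1) (le_of_lt hs1)
    rwa [Real.rpow_inv_rpow (by positivity) (ne_of_gt hs1)] at h2
  set δ : ℝ := C * σ ^ (s - 1) with hδ_def
  have hδpos : 0 < δ := by positivity
  have hδδ₀ : δ ≤ δ₀ := by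
    have := mul_le_mul_of_nonneg_left hσpow_lt (le_of_lt hC)
    calc δ = C * σ ^ (s - 1) := rfl
      _ ≤ C * (δ₀ / C) := this
      _ = δ₀ := by field_simp
  -- the interval [ξs - δ, ξs + δ]
  have hsub : Set.Icc (ξs - δ) (ξs + δ) ⊆ Set.Ioo 0 L := by
    intro x hx
    constructor
    · linarith [hx.1, hδδ₀, hδ₀b]
    · linarith [hx.2, hδδ₀, hδ₀c]
  have hsub' : Set.Icc (ξs - δ) (ξs + δ) ⊆ Set.Icc 0 L := by
    intro x hx; exact ⟨le_of_lt (hsub hx).1, le_of_lt (hsub hx).2⟩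
  -- the auxiliary function G
  set G : ℝ → ℝ := fun ξ => Rσ ξ - Pσs + A₁ * σ ^ (s - 1) * (Rκ ξ - Pκs) with hG_def
  have hRκcont : Continuous Rκ := by
    rw [hRκ]
    exact continuous_const.add (continuous_const.mul continuous_id)
  have hGcont : Continuous G := by
    rw [hG_def]
    exact (hRσcont.sub continuous_const).add
      (continuous_const.mul (hRκcont.sub continuous_const))
  clear_value c δ₀ M C δ G
  -- bounds on G at the endpoints
  have hmemp : |(ξs + δ) - ξs| ≤ δ₀ := by
    rw [show (ξs + δ) - ξs = δ by ring, abs_of_pos hδpos]; exact hδδ₀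
  have hmemm : |(ξs - δ) - ξs| ≤ δ₀ := by
    rw [show (ξs - δ) - ξs = -δ by ring, abs_neg, abs_of_pos hδpos]; exact hδδ₀
  have hbdp : |Rκ (ξs + δ) - Pκs| ≤ M :=
    hRκbd _ (hsub' ⟨by linarith, le_refl _⟩)
  have hbdm : |Rκ (ξs - δ) - Pκs| ≤ M :=
    hRκbd _ (hsub' ⟨le_refl _, by linarith⟩)
  have hbdp1 := abs_le.mp hbdp
  have hbdm1 := abs_le.mp hbdm
  -- key integral bounds, by cases on the sign of Θ ξs
  have hGsign : G (ξs - δ) * G (ξs + δ) ≤ 0 := by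
    rcases lt_or_gt_of_ne hΘξ with hneg | hpos
    · -- Θ ξs < 0 : Θ ≤ -c near ξs
      have habs : |Θ ξs| = -Θ ξs := abs_of_neg hneg
      have hΘle : ∀ x, |x - ξs| ≤ δ₀ → Θ x ≤ -c := by
        intro x hx
        have h := abs_lt.mp (hΘnear x hx)
        have : Θ x < Θ ξs + c := by linarith [h.2]
        have hv : Θ ξs = -(2 * c) := by rw [hc_def, habs]; ring
        linarith
      -- upper bound for the integral over [ξs, ξs+δ]
      have hI1 : (∫ y in ξs..(ξs + δ), Θ y) ≤ -c * δ := by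
        have hmono : ∀ x ∈ Set.Icc ξs (ξs + δ), Θ x ≤ -c := by
          intro x hx
          apply hΘle
          rw [abs_le]; constructor <;> [linarith [hx.1]; linarith [hx.2]]
        calc (∫ y in ξs..(ξs + δ), Θ y) ≤ ∫ _ in ξs..(ξs + δ), (-c : ℝ) := by
              apply intervalIntegral.integral_mono_on (by linarith) (hΘi _ _)
                intervalIntegrable_const hmono
          _ = -c * δ := by
              rw [intervalIntegral.integral_const]
              simp [smul_eq_mul]; ring
      have hI2 : (∫ y in (ξs - δ)..ξs, Θ y) ≤ -c * δ := by
        have hmono : ∀ x ∈ Set.Icc (ξs - δ) ξs, Θ x ≤ -c := by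
          intro x hx
          apply hΘle
          rw [abs_le]; constructor <;> [linarith [hx.1]; linarith [hx.2]]
        calc (∫ y in (ξs - δ)..ξs, Θ y) ≤ ∫ _ in (ξs - δ)..ξs, (-c : ℝ) := by
              apply intervalIntegral.integral_mono_on (by linarith) (hΘi _ _)
                intervalIntegrable_const hmono
          _ = -c * δ := by
              rw [intervalIntegral.integral_const]
              simp [smul_eq_mul]; ring
      have hd1 := hdiff ξs (ξs + δ)
      have hd2 := hdiff (ξs - δ) ξs
      -- G(ξs+δ) ≥ A₁ M σ^(s-1) > 0, G(ξs-δ) ≤ -A₁ M σ^(s-1) < 0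
      have hAσ : 0 ≤ A₁ * σ ^ (s - 1) := by positivity
      have h2 : K₁ * c * δ = 2 * A₁ * M * σ ^ (s - 1) := by
        rw [hδ_def, ← hKcC]; ring
      have hGp : 0 ≤ G (ξs + δ) := by
        have hm1 : K₁ * (∫ y in ξs..(ξs + δ), Θ y) ≤ K₁ * (-c * δ) :=
          mul_le_mul_of_nonneg_left hI1 hK₁.le
        have h1 : Rσ (ξs + δ) - Pσs ≥ K₁ * c * δ := by
          rw [← hroot]; linarith [hd1]
        have hm2 : A₁ * σ ^ (s - 1) * (-M) ≤ A₁ * σ ^ (s - 1) * (Rκ (ξs + δ) - Pκs) :=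
          mul_le_mul_of_nonneg_left hbdp1.1 hAσ
        have hAM : 0 ≤ A₁ * M * σ ^ (s - 1) := by positivity
        simp only [hG_def]
        linarith [hm2, h1, h2, hAM]
      have hGm : G (ξs - δ) ≤ 0 := by
        have hm1 : K₁ * (∫ y in (ξs - δ)..ξs, Θ y) ≤ K₁ * (-c * δ) :=
          mul_le_mul_of_nonneg_left hI2 hK₁.le
        have h1 : Rσ (ξs - δ) - Pσs ≤ -(K₁ * c * δ) := by
          rw [← hroot]; linarith [hd2]
        have hm2 : A₁ * σ ^ (s - 1) * (Rκ (ξs - δ) - Pκs) ≤ A₁ * σ ^ (s - 1) * M :=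
          mul_le_mul_of_nonneg_left hbdm1.2 hAσ
        have hAM : 0 ≤ A₁ * M * σ ^ (s - 1) := by positivity
        simp only [hG_def]
        linarith [hm2, h1, h2, hAM]
      exact mul_nonpos_of_nonpos_of_nonneg hGm hGp
    · -- Θ ξs > 0 : Θ ≥ c near ξs
      have habs : |Θ ξs| = Θ ξs := abs_of_pos hpos
      have hΘge : ∀ x, |x - ξs| ≤ δ₀ → c ≤ Θ x := by
        intro x hx
        have h := abs_lt.mp (hΘnear x hx)
        have hv : Θ ξs = 2 * c := by rw [hc_def, habs]; ring
        linarith [h.1]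
      have hI1 : c * δ ≤ (∫ y in ξs..(ξs + δ), Θ y) := by
        have hmono : ∀ x ∈ Set.Icc ξs (ξs + δ), c ≤ Θ x := by
          intro x hx
          apply hΘge
          rw [abs_le]; constructor <;> [linarith [hx.1]; linarith [hx.2]]
        calc c * δ = ∫ _ in ξs..(ξs + δ), (c : ℝ) := by
              rw [intervalIntegral.integral_const]
              simp [smul_eq_mul]; ring
          _ ≤ ∫ y in ξs..(ξs + δ), Θ y := by
              apply intervalIntegral.integral_mono_on (by linarith)
                intervalIntegrable_const (hΘi _ _) hmono
      have hI2 : c * δ ≤ (∫ y in (ξs - δ)..ξs, Θ y) := by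
        have hmono : ∀ x ∈ Set.Icc (ξs - δ) ξs, c ≤ Θ x := by
          intro x hx
          apply hΘge
          rw [abs_le]; constructor <;> [linarith [hx.1]; linarith [hx.2]]
        calc c * δ = ∫ _ in (ξs - δ)..ξs, (c : ℝ) := by
              rw [intervalIntegral.integral_const]
              simp [smul_eq_mul]; ring
          _ ≤ ∫ y in (ξs - δ)..ξs, Θ y := by
              apply intervalIntegral.integral_mono_on (by linarith)
                intervalIntegrable_const (hΘi _ _) hmono
      have hd1 := hdiff ξs (ξs + δ)
      have hd2 := hdiff (ξs - δ) ξs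
      have hAσ : 0 ≤ A₁ * σ ^ (s - 1) := by positivity
      have h2 : K₁ * c * δ = 2 * A₁ * M * σ ^ (s - 1) := by
        rw [hδ_def, ← hKcC]; ring
      have hGp : G (ξs + δ) ≤ 0 := by
        have hm1 : K₁ * (c * δ) ≤ K₁ * (∫ y in ξs..(ξs + δ), Θ y) :=
          mul_le_mul_of_nonneg_left hI1 hK₁.le
        have h1 : Rσ (ξs + δ) - Pσs ≤ -(K₁ * c * δ) := by
          rw [← hroot]; linarith [hd1]
        have hm2 : A₁ * σ ^ (s - 1) * (Rκ (ξs + δ) - Pκs) ≤ A₁ * σ ^ (s - 1) * M :=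
          mul_le_mul_of_nonneg_left hbdp1.2 hAσ
        have hAM : 0 ≤ A₁ * M * σ ^ (s - 1) := by positivity
        simp only [hG_def]
        linarith [hm2, h1, h2, hAM]
      have hGm : 0 ≤ G (ξs - δ) := by
        have hm1 : K₁ * (c * δ) ≤ K₁ * (∫ y in (ξs - δ)..ξs, Θ y) :=
          mul_le_mul_of_nonneg_left hI2 hK₁.le
        have h1 : Rσ (ξs - δ) - Pσs ≥ K₁ * c * δ := by
          rw [← hroot]; linarith [hd2]
        have hm2 : A₁ * σ ^ (s - 1) * (-M) ≤ A₁ * σ ^ (s - 1) * (Rκ (ξs - δ) - Pκs) :=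
          mul_le_mul_of_nonneg_left hbdm1.1 hAσ
        have hAM : 0 ≤ A₁ * M * σ ^ (s - 1) := by positivity
        simp only [hG_def]
        linarith [hm2, h1, h2, hAM]
      exact mul_nonpos_of_nonneg_of_nonpos hGm hGp
  -- apply the IVT
  obtain ⟨ξ, hξmem, hξzero⟩ := ivt_zero (by linarith : ξs - δ ≤ ξs + δ)
    hGcont.continuousOn hGsign
  refine ⟨ξ, hsub hξmem, ?_, ?_⟩
  · -- the equation
    have hσs : σ ^ s = σ * σ ^ (s - 1) := by
      have h := (Real.rpow_add hσ0 1 (s - 1)).symm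
      rw [Real.rpow_one, show (1 : ℝ) + (s - 1) = s by ring] at h
      exact h.symm
    rw [hσs]
    have hGξ : Rσ ξ - Pσs + A₁ * σ ^ (s - 1) * (Rκ ξ - Pκs) = 0 := by
      have := hξzero
      simp only [hG_def] at this
      exact this
    linear_combination σ * hGξ
  · rw [abs_le]
    exact ⟨by linarith [hξmem.1], by linarith [hξmem.2]⟩
end

section
/- Let R(ξ; σ, κ) = σ R_σ(ξ) + κ R_κ(ξ) with R_σ ∈ C¹([0,L]), R_σ'(ξ) = −K̇₁Θ(ξ), R_κ(ξ) = −f̄₁⁺L + K̇₂ξ with K̇₂ > 0. Suppose σ = A₂ κ^s with s > 1, A₂ > 0, and ξ̄* ∈ (0,L) satisfies R_κ(ξ̄*) = P_{κ*}, where P_*(σ,κ) = σP_{σ*} + κP_{κ*}. Then there exists κ₁ > 0 such that for all κ ∈ (0, κ₁) the equation R(ξ;σ,κ) = P_*(σ,κ) has a solution ξ(κ) ∈ (0,L) with |ξ(κ) − ξ̄*| ≤ C κ^{s−1} for a constant C independent of κ. -/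
/-- Case (ii) of the approximating shock location: when the exothermic
reaction dominates the boundary perturbation (`σ = A₂κˢ`, `s > 1`), the
solvability equation `σR_σ(ξ) + κR_κ(ξ) = σP_{σ*} + κP_{κ*}` has a solution
`ξ(κ)` with `|ξ(κ) − ξ̄*| ≤ Cκ^{s−1}` for all small `κ`. -/
theorem stmt8 (L K₁ K₂ f₁ A₂ s Pσs Pκs ξs : ℝ)
    (hL : 0 < L) (hK₁ : 0 < K₁) (hK₂ : 0 < K₂) (hf : 0 < f₁)
    (hA : 0 < A₂) (hs : 1 < s)
    (Θ : ℝ → ℝ) (hΘ : Continuous Θ)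
    (Rσ : ℝ → ℝ)
    (hRσ : Rσ = fun ξ => (∫ y in (0:ℝ)..L, Θ y) - K₁ * ∫ y in (0:ℝ)..ξ, Θ y)
    (Rκ : ℝ → ℝ) (hRκ : Rκ = fun ξ => -f₁ * L + K₂ * ξ)
    (hξs : ξs ∈ Set.Ioo (0 : ℝ) L) (hroot : Rκ ξs = Pκs) :
    ∃ C > 0, ∃ κ₁ > 0, ∀ κ ∈ Set.Ioo (0 : ℝ) κ₁, ∃ ξ ∈ Set.Ioo (0 : ℝ) L,
      (A₂ * κ ^ s) * Rσ ξ + κ * Rκ ξ = (A₂ * κ ^ s) * Pσs + κ * Pκs ∧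
      |ξ - ξs| ≤ C * κ ^ (s - 1) := by
  obtain ⟨hξ0, hξL⟩ := hξs
  -- continuity of Rσ
  have hRσc : Continuous Rσ := by
    rw [hRσ]
    exact continuous_const.sub (continuous_const.mul
      (intervalIntegral.continuous_primitive (fun a b => hΘ.intervalIntegrable a b) 0))
  -- bound M on |Rσ - Pσs| over [0, L]
  obtain ⟨M, hM⟩ := (isCompact_Icc (a := (0:ℝ)) (b := L)).exists_bound_of_continuousOn
    ((hRσc.sub continuous_const).continuousOn)
  set M' : ℝ := |M| + 1 with hM'
  have hM'pos : 0 < M' := by positivity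
  have hMle : ∀ ξ ∈ Set.Icc (0:ℝ) L, |Rσ ξ - Pσs| ≤ M' := fun ξ hξ =>
    (hM ξ hξ).trans (by simp [hM']; exact (le_abs_self M).trans (by linarith [abs_nonneg M]))
  set C : ℝ := A₂ * M' / K₂ with hC
  have hCpos : 0 < C := by positivity
  set ε : ℝ := min ξs (L - ξs) with hε
  have hεpos : 0 < ε := lt_min hξ0 (by linarith)
  refine ⟨C, hCpos, (ε / (2 * C)) ^ ((s - 1)⁻¹), Real.rpow_pos_of_pos (by positivity) _,
    fun κ ⟨hκ0, hκ1⟩ => ?_⟩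
  have hs1 : 0 < s - 1 := by linarith
  set δ : ℝ := C * κ ^ (s - 1) with hδ
  have hδpos : 0 < δ := by positivity
  have hδε : δ < ε := by
    have h1 : κ ^ (s - 1) < ((ε / (2 * C)) ^ ((s - 1)⁻¹)) ^ (s - 1) :=
      Real.rpow_lt_rpow hκ0.le hκ1 hs1
    rw [← Real.rpow_mul (by positivity), inv_mul_cancel₀ (by linarith), Real.rpow_one] at h1
    have h2 : δ < C * (ε / (2 * C)) := by
      rw [hδ]; exact (mul_lt_mul_iff_right₀ hCpos).2 h1
    calc δ < C * (ε / (2 * C)) := h2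
      _ = ε / 2 := by field_simp
      _ < ε := by linarith
  set σ : ℝ := A₂ * κ ^ s with hσ
  have hσpos : 0 < σ := by positivity
  -- key identity: σ * M' = κ * K₂ * δ
  have hkey : κ * (K₂ * δ) = σ * M' := by
    rw [hδ, hσ, hC]
    have h1 := Real.rpow_add hκ0 1 (s - 1)
    rw [show (1:ℝ) + (s - 1) = s by ring, Real.rpow_one] at h1
    rw [h1]
    field_simp
  -- the function F
  set F : ℝ → ℝ := fun ξ => σ * Rσ ξ + κ * Rκ ξ - (σ * Pσs + κ * Pκs) with hF
  have hFc : Continuous F := by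
    rw [hF, hRκ]
    fun_prop
  have hFeq : ∀ ξ, F ξ = σ * (Rσ ξ - Pσs) + κ * (K₂ * (ξ - ξs)) := by
    intro ξ
    have : Pκs = -f₁ * L + K₂ * ξs := by rw [← hroot, hRκ]
    rw [hF, hRκ, this]; ring
  have ha0 : (0:ℝ) < ξs - δ := by
    have := min_le_left ξs (L - ξs); rw [← hε] at this; linarith
  have hbL : ξs + δ < L := by
    have := min_le_right ξs (L - ξs); rw [← hε] at this; linarith
  have hmem : ∀ ξ ∈ Set.Icc (ξs - δ) (ξs + δ), ξ ∈ Set.Icc (0:ℝ) L := by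
    rintro ξ ⟨h1, h2⟩; exact ⟨by linarith, by linarith⟩
  have hFa : F (ξs - δ) ≤ 0 := by
    rw [hFeq]
    have := hMle (ξs - δ) (hmem _ ⟨le_refl _, by linarith⟩)
    have h2 : σ * (Rσ (ξs - δ) - Pσs) ≤ σ * M' :=
      (mul_le_mul_iff_right₀ hσpos).2 ((le_abs_self _).trans this)
    have h3 : κ * (K₂ * (ξs - δ - ξs)) = -(σ * M') := by
      rw [show ξs - δ - ξs = -δ by ring]; rw [← hkey]; ring
    linarith
  have hFb : 0 ≤ F (ξs + δ) := by
    rw [hFeq]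
    have := hMle (ξs + δ) (hmem _ ⟨by linarith, le_refl _⟩)
    have h2 : -(σ * M') ≤ σ * (Rσ (ξs + δ) - Pσs) := by
      have := (neg_abs_le (Rσ (ξs + δ) - Pσs)).trans' (neg_le_neg this)
      nlinarith
    have h3 : κ * (K₂ * (ξs + δ - ξs)) = σ * M' := by
      rw [show ξs + δ - ξs = δ by ring]; rw [← hkey]
    linarith
  have hsub : Set.Icc (F (ξs - δ)) (F (ξs + δ)) ⊆ F '' Set.Icc (ξs - δ) (ξs + δ) :=
    intermediate_value_Icc (by linarith) hFc.continuousOn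
  obtain ⟨ξ, hξmem, hξval⟩ := hsub ⟨hFa, hFb⟩
  refine ⟨ξ, ⟨by have := hξmem.1; linarith, by have := hξmem.2; linarith⟩, ?_, ?_⟩
  · have h0 : σ * Rσ ξ + κ * Rκ ξ - (σ * Pσs + κ * Pκs) = 0 := hξval
    linarith
  · rw [abs_sub_le_iff]
    constructor <;> [skip; skip] <;> [have := hξmem.2; have := hξmem.1] <;>
      simp only [hδ] at this ⊢ <;> linarith
end
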